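/- (Generalized Gronwall inequality with weakly singular kernel.) Let β ∈ (1/2, 1), a ≥ 0, b ≥ 0, and let φ : [0, u] → ℝ be nonnegative, bounded, and measurable satisfying φ(t) ≤ a + b·∫₀ᵗ (t-s)^{(2β-1)-1} φ(s) ds for all t ∈ [0, u]. Then φ(t) ≤ a·∑_{k=0}^∞ (b·Γ(2β-1))^k · t^{k(2β-1)} / Γ(k(2β-1)+1) for all t ∈ [0, u]; in particular φ(t) ≤ a·E_{2β-1}(b·Γ(2β-1)·t^{2β-1}), where E_γ is the Mittag-Leffler function. -/

import Mathlib

/-!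
With `c = b Γ(γ)` and `E_k(t) = c^k t^(kγ) / Γ(kγ + 1)`, the Beta integral gives
`b ∫₀ᵗ (t - s)^(γ-1) E_k(s) ds = E_(k+1)(t)`. Hence, if `φ ≤ M`, iterating the inequality
`n` times gives `φ ≤ a (E_0 + ⋯ + E_(n-1)) + M E_n`. The series `∑ E_k(t)` converges because
`Γ(kγ + 1) ≥ R^(kγ) e^(-R)` for every `R ≥ 0`, so the remainder `M E_n(t)` tends to `0`.
-/

open Real MeasureTheory intervalIntegral

theorem Real.rpow_mul_exp_neg_le_Gamma_add_one {s R : ℝ} (hs : 0 ≤ s) (hR : 0 ≤ R) :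
    R ^ s * exp (-R) ≤ Gamma (s + 1) := by
  have hΓ := GammaIntegral_convergent (by linarith : 0 < s + 1)
  simp only [add_sub_cancel_right] at hΓ
  rw [Gamma_eq_integral (by linarith), add_sub_cancel_right, ← integral_exp_neg_Ioi,
    ← MeasureTheory.integral_const_mul]
  calc ∫ x in Set.Ioi R, R ^ s * exp (-x)
      ≤ ∫ x in Set.Ioi R, exp (-x) * x ^ s :=
        setIntegral_mono_on ((integrableOn_exp_neg_Ioi R).const_mul _)
          (hΓ.mono_set (Set.Ioi_subset_Ioi hR)) measurableSet_Ioi fun x hx => by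
            rw [mul_comm]; gcongr; exact le_of_lt hx
    _ ≤ ∫ x in Set.Ioi 0, exp (-x) * x ^ s :=
        setIntegral_mono_set hΓ
          (ae_restrict_of_forall_mem measurableSet_Ioi fun x hx =>
            mul_nonneg (exp_pos _).le (rpow_nonneg (le_of_lt hx) _))
          (Set.Ioi_subset_Ioi hR).eventuallyLE

theorem summable_pow_div_Gamma_mul_add_one {γ : ℝ} (hγ : 0 < γ) (x : ℝ) :
    Summable fun k : ℕ => x ^ k / Gamma (k * γ + 1) := by
  -- `R ^ (kγ) = (2|x| + 1) ^ k`, so the terms are dominated by `e^R (|x| / (2|x| + 1)) ^ k`.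
  set R := (2 * |x| + 1) ^ γ⁻¹
  have hR : R ^ γ = 2 * |x| + 1 := by
    rw [← rpow_mul (by positivity), inv_mul_cancel₀ hγ.ne', rpow_one]
  have hr : |x| / (2 * |x| + 1) < 1 := by
    rw [div_lt_one (by positivity)]; linarith [abs_nonneg x]
  refine Summable.of_norm_bounded ((summable_geometric_of_lt_one (by positivity) hr).mul_left
    (exp R)) fun k => ?_
  have hΓ : (2 * |x| + 1) ^ k * exp (-R) ≤ Gamma (k * γ + 1) := by
    simpa [rpow_mul (by positivity : 0 ≤ R), hR, mul_comm]
      using rpow_mul_exp_neg_le_Gamma_add_one (by positivity : 0 ≤ (k : ℝ) * γ)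
        (by positivity : 0 ≤ R)
  rw [exp_neg] at hΓ
  rw [norm_div, norm_pow, Real.norm_eq_abs, Real.norm_eq_abs,
    abs_of_pos (Gamma_pos_of_pos (by positivity)), div_pow]
  calc |x| ^ k / Gamma (k * γ + 1) ≤ |x| ^ k / ((2 * |x| + 1) ^ k * (exp R)⁻¹) := by gcongr
    _ = exp R * (|x| ^ k / (2 * |x| + 1) ^ k) := by field_simp

theorem integral_rpow_mul_sub_rpow {p q t : ℝ} (hp : 0 < p) (hq : 0 < q) (ht : 0 < t) :
    ∫ s in (0:ℝ)..t, s ^ (p - 1) * (t - s) ^ (q - 1)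
      = Gamma p * Gamma q / Gamma (p + q) * t ^ (p + q - 1) := by
  have hΓ : (Gamma (p + q) : ℂ) ≠ 0 := by exact_mod_cast (Gamma_pos_of_pos (by linarith)).ne'
  have hbeta := Complex.Gamma_mul_Gamma_eq_betaIntegral (s := p) (t := q)
    (by simpa using hp) (by simpa using hq)
  rw [← Complex.ofReal_add, Complex.Gamma_ofReal, Complex.Gamma_ofReal,
    Complex.Gamma_ofReal] at hbeta
  apply Complex.ofReal_injective
  rw [← intervalIntegral.integral_ofReal]
  calc ∫ s in (0:ℝ)..t, ((s ^ (p - 1) * (t - s) ^ (q - 1) : ℝ) : ℂ)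
      = ∫ s in (0:ℝ)..t, (s : ℂ) ^ ((p : ℂ) - 1) * ((t : ℂ) - s) ^ ((q : ℂ) - 1) := by
        refine integral_congr fun s hs => ?_
        rw [Set.uIcc_of_le ht.le] at hs
        simp only [Complex.ofReal_mul]
        rw [Complex.ofReal_cpow hs.1, Complex.ofReal_cpow (sub_nonneg.2 hs.2)]
        push_cast; rfl
    _ = _ := by
        have hB : Complex.betaIntegral p q = Gamma p * Gamma q / Gamma (p + q) :=
          eq_div_of_mul_eq hΓ (by rw [hbeta]; ring)
        rw [Complex.betaIntegral_scaled _ _ ht, hB]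
        push_cast [Complex.ofReal_cpow ht.le]
        ring

/-- `Γ(γ)` times the Riemann–Liouville integral of order `γ`. -/
noncomputable def singularKernelIntegral (γ : ℝ) (f : ℝ → ℝ) (t : ℝ) : ℝ :=
  ∫ s in (0:ℝ)..t, (t - s) ^ (γ - 1) * f s

theorem intervalIntegrable_sub_rpow_mul {γ t C : ℝ} {f : ℝ → ℝ} (hγ : 0 < γ)
    (ht : 0 ≤ t) (hf : AEStronglyMeasurable f) (hC : ∀ s ∈ Set.Icc 0 t, ‖f s‖ ≤ C) :
    IntervalIntegrable (fun s => (t - s) ^ (γ - 1) * f s) volume 0 t := by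
  have hkernel : IntervalIntegrable (fun s => (t - s) ^ (γ - 1)) volume 0 t := by
    simpa using ((intervalIntegral.intervalIntegrable_rpow' (r := γ - 1) (a := 0) (b := t)
      (by linarith)).comp_sub_left t).symm
  rw [intervalIntegrable_iff_integrableOn_Ioc_of_le ht] at hkernel ⊢
  exact hkernel.mul_bdd hf.restrict
    (ae_restrict_of_forall_mem measurableSet_Ioc fun s hs => hC s (Set.Ioc_subset_Icc_self hs))

theorem Continuous.intervalIntegrable_sub_rpow_mul {γ t : ℝ} {f : ℝ → ℝ}
    (hf : Continuous f) (hγ : 0 < γ) (ht : 0 ≤ t) :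
    IntervalIntegrable (fun s => (t - s) ^ (γ - 1) * f s) volume 0 t :=
  have ⟨_, hC⟩ := isCompact_Icc.exists_bound_of_continuousOn hf.continuousOn
  _root_.intervalIntegrable_sub_rpow_mul hγ ht hf.aestronglyMeasurable hC

theorem singularKernelIntegral_mono {γ t : ℝ} {f g : ℝ → ℝ} (ht : 0 ≤ t)
    (hf : IntervalIntegrable (fun s => (t - s) ^ (γ - 1) * f s) volume 0 t)
    (hg : IntervalIntegrable (fun s => (t - s) ^ (γ - 1) * g s) volume 0 t)
    (hfg : ∀ s ∈ Set.Icc 0 t, f s ≤ g s) :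
    singularKernelIntegral γ f t ≤ singularKernelIntegral γ g t :=
  integral_mono_on ht hf hg fun s hs =>
    mul_le_mul_of_nonneg_left (hfg s hs) (rpow_nonneg (sub_nonneg.2 hs.2) _)

noncomputable def mittagLefflerTerm (γ c : ℝ) (k : ℕ) (t : ℝ) : ℝ :=
  c ^ k * t ^ (k * γ) / Gamma (k * γ + 1)

@[simp]
theorem mittagLefflerTerm_zero (γ c t : ℝ) : mittagLefflerTerm γ c 0 t = 1 := by
  simp [mittagLefflerTerm]

theorem continuous_mittagLefflerTerm {γ : ℝ} (hγ : 0 ≤ γ) (c : ℝ) (k : ℕ) :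
    Continuous (mittagLefflerTerm γ c k) :=
  (continuous_const.mul (continuous_rpow_const (by positivity))).div_const _

theorem mittagLefflerTerm_eq_pow_div {γ t : ℝ} (ht : 0 ≤ t) (c : ℝ) (k : ℕ) :
    mittagLefflerTerm γ c k t = (c * t ^ γ) ^ k / Gamma (k * γ + 1) := by
  rw [mittagLefflerTerm, mul_pow, ← rpow_natCast (t ^ γ), ← rpow_mul ht, mul_comm γ]

theorem summable_mittagLefflerTerm {γ t : ℝ} (hγ : 0 < γ) (ht : 0 ≤ t) (c : ℝ) :
    Summable fun k => mittagLefflerTerm γ c k t := by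
  simpa only [mittagLefflerTerm_eq_pow_div ht] using summable_pow_div_Gamma_mul_add_one hγ _

theorem mul_singularKernelIntegral_mittagLefflerTerm {γ t : ℝ} (hγ : 0 < γ) (ht : 0 ≤ t)
    (b : ℝ) (k : ℕ) :
    b * singularKernelIntegral γ (mittagLefflerTerm γ (b * Gamma γ) k) t
      = mittagLefflerTerm γ (b * Gamma γ) (k + 1) t := by
  rcases ht.eq_or_lt with rfl | ht
  · simp [singularKernelIntegral, mittagLefflerTerm,
      zero_rpow (by positivity : ((k : ℝ) + 1) * γ ≠ 0)]
  have hΓ : Gamma (k * γ + 1) ≠ 0 := (Gamma_pos_of_pos (by positivity)).ne'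
  have hexp : ((k + 1 : ℕ) : ℝ) * γ = k * γ + 1 + γ - 1 := by push_cast; ring
  calc b * ∫ s in (0:ℝ)..t, (t - s) ^ (γ - 1) * mittagLefflerTerm γ (b * Gamma γ) k s
      = b * ∫ s in (0:ℝ)..t, (b * Gamma γ) ^ k / Gamma (k * γ + 1) *
          (s ^ (k * γ + 1 - 1) * (t - s) ^ (γ - 1)) := by
        congr 1
        refine integral_congr fun s _ => ?_
        simp only [mittagLefflerTerm, add_sub_cancel_right]
        ring
    _ = mittagLefflerTerm γ (b * Gamma γ) (k + 1) t := by
        rw [intervalIntegral.integral_const_mul, integral_rpow_mul_sub_rpow (by positivity) hγ ht,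
          mittagLefflerTerm, hexp, sub_add_cancel]
        field_simp
        ring

noncomputable def mittagLefflerMajorant (γ c a M : ℝ) (n : ℕ) (t : ℝ) : ℝ :=
  a * ∑ k ∈ Finset.range n, mittagLefflerTerm γ c k t + M * mittagLefflerTerm γ c n t

theorem continuous_mittagLefflerMajorant {γ : ℝ} (hγ : 0 ≤ γ) (c a M : ℝ) (n : ℕ) :
    Continuous (mittagLefflerMajorant γ c a M n) :=
  (continuous_const.mul
    (continuous_finsetSum _ fun k _ => continuous_mittagLefflerTerm hγ c k)).add
    (continuous_const.mul (continuous_mittagLefflerTerm hγ c n))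

theorem singularKernelIntegral_mittagLefflerMajorant {γ t : ℝ} (hγ : 0 < γ) (ht : 0 ≤ t)
    (c a M : ℝ) (n : ℕ) :
    singularKernelIntegral γ (mittagLefflerMajorant γ c a M n) t
      = a * ∑ k ∈ Finset.range n, singularKernelIntegral γ (mittagLefflerTerm γ c k) t
        + M * singularKernelIntegral γ (mittagLefflerTerm γ c n) t := by
  have hint (k : ℕ) :=
    (continuous_mittagLefflerTerm hγ.le c k).intervalIntegrable_sub_rpow_mul hγ ht
  have hsum : IntervalIntegrable (fun s => ∑ k ∈ Finset.range n,
      (t - s) ^ (γ - 1) * mittagLefflerTerm γ c k s) volume 0 t := by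
    simpa only [Finset.sum_fn] using IntervalIntegrable.sum (Finset.range n) fun k _ => hint k
  simp only [singularKernelIntegral]
  rw [← intervalIntegral.integral_finsetSum fun k _ => hint k,
    ← intervalIntegral.integral_const_mul, ← intervalIntegral.integral_const_mul,
    ← integral_add (hsum.const_mul a) ((hint n).const_mul M)]
  refine integral_congr fun s _ => ?_
  simp only [mittagLefflerMajorant, mul_add, Finset.mul_sum, mul_left_comm]

theorem add_mul_singularKernelIntegral_mittagLefflerMajorant {γ t : ℝ} (hγ : 0 < γ)
    (ht : 0 ≤ t) (a b M : ℝ) (n : ℕ) :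
    a + b * singularKernelIntegral γ (mittagLefflerMajorant γ (b * Gamma γ) a M n) t
      = mittagLefflerMajorant γ (b * Gamma γ) a M (n + 1) t := by
  rw [singularKernelIntegral_mittagLefflerMajorant hγ ht, mul_add, mul_left_comm b a,
    Finset.mul_sum, mul_left_comm b M, mul_singularKernelIntegral_mittagLefflerTerm hγ ht,
    mittagLefflerMajorant, Finset.sum_range_succ' _ n, mittagLefflerTerm_zero]
  simp only [mul_singularKernelIntegral_mittagLefflerTerm hγ ht]
  ring

theorem le_mittagLefflerMajorant {γ u a b M : ℝ} {φ : ℝ → ℝ} (hγ : 0 < γ) (hb : 0 ≤ b)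
    (hφM : ∀ t ∈ Set.Icc 0 u, |φ t| ≤ M) (hφm : AEStronglyMeasurable φ)
    (hineq : ∀ t ∈ Set.Icc 0 u, φ t ≤ a + b * singularKernelIntegral γ φ t) (n : ℕ) :
    ∀ t ∈ Set.Icc 0 u, φ t ≤ mittagLefflerMajorant γ (b * Gamma γ) a M n t := by
  induction n with
  | zero => simpa [mittagLefflerMajorant] using fun t ht => (le_abs_self _).trans (hφM t ht)
  | succ n ih =>
    intro t ht
    have hφint := intervalIntegrable_sub_rpow_mul hγ ht.1 hφm
      fun s hs => hφM s ⟨hs.1, hs.2.trans ht.2⟩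
    have hmajint := (continuous_mittagLefflerMajorant hγ.le (b * Gamma γ) a M n
      ).intervalIntegrable_sub_rpow_mul hγ ht.1
    calc φ t ≤ a + b * singularKernelIntegral γ φ t := hineq t ht
      _ ≤ a + b * singularKernelIntegral γ
            (mittagLefflerMajorant γ (b * Gamma γ) a M n) t := by
        gcongr
        exact singularKernelIntegral_mono ht.1 hφint hmajint
          fun s hs => ih s ⟨hs.1, hs.2.trans ht.2⟩
      _ = _ := add_mul_singularKernelIntegral_mittagLefflerMajorant hγ ht.1 a b M n

theorem singular_gronwall_general (β u a b : ℝ) (hβ : 1/2 < β)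
    (hb : 0 ≤ b) (φ : ℝ → ℝ) (hφ0 : ∀ t, 0 ≤ φ t)
    (hφbd : ∃ M, ∀ t ∈ Set.Icc (0:ℝ) u, φ t ≤ M) (hφm : Measurable φ)
    (hineq : ∀ t ∈ Set.Icc (0:ℝ) u,
      φ t ≤ a + b * ∫ s in (0:ℝ)..t, (t - s) ^ ((2*β - 1) - 1) * φ s) :
    ∀ t ∈ Set.Icc (0:ℝ) u,
      φ t ≤ a * ∑' k : ℕ,
        (b * Real.Gamma (2*β - 1)) ^ k * t ^ ((k:ℝ) * (2*β - 1)) /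
          Real.Gamma ((k:ℝ) * (2*β - 1) + 1) := by
  obtain ⟨M, hM⟩ := hφbd
  set γ := 2 * β - 1
  have hγ : 0 < γ := by linarith
  have hbound := le_mittagLefflerMajorant hγ hb
    (fun t ht => (abs_of_nonneg (hφ0 t)).trans_le (hM t ht)) hφm.aestronglyMeasurable hineq
  intro t ht
  have hsum := summable_mittagLefflerTerm hγ ht.1 (b * Gamma γ)
  have hlim : Filter.Tendsto (fun n => mittagLefflerMajorant γ (b * Gamma γ) a M n t)
      Filter.atTop (nhds (a * ∑' k, mittagLefflerTerm γ (b * Gamma γ) k t)) := by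
    simpa [mittagLefflerMajorant] using (hsum.hasSum.tendsto_sum_nat.const_mul a).add
      (hsum.tendsto_atTop_zero.const_mul M)
  exact ge_of_tendsto' hlim fun n => hbound n t ht

theorem singular_gronwall (β u a b : ℝ) (hβ : 1/2 < β) (hβ1 : β < 1)
    (ha : 0 ≤ a) (hb : 0 ≤ b) (φ : ℝ → ℝ) (hφ0 : ∀ t, 0 ≤ φ t)
    (hφbd : ∃ M, ∀ t ∈ Set.Icc (0:ℝ) u, φ t ≤ M) (hφm : Measurable φ)
    (hineq : ∀ t ∈ Set.Icc (0:ℝ) u,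
      φ t ≤ a + b * ∫ s in (0:ℝ)..t, (t - s) ^ ((2*β - 1) - 1) * φ s) :
    ∀ t ∈ Set.Icc (0:ℝ) u,
      φ t ≤ a * ∑' k : ℕ,
        (b * Real.Gamma (2*β - 1)) ^ k * t ^ ((k:ℝ) * (2*β - 1)) /
          Real.Gamma ((k:ℝ) * (2*β - 1) + 1) :=
  singular_gronwall_general β u a b hβ hb φ hφ0 hφbd hφm hineq
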